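/- arXiv:1608.01008 — 2 statements merged into one kernel-verified Lean document; each statement's English description precedes it below -/
import Mathlib

section
/- Let P be the transition matrix of an irreducible Markov chain on a finite state space Ω that is reversible with respect to a stationary distribution μ with μ(x) > 0 for all x. Let E = {(X,Y) ∈ Ω×Ω : X ≠ Y, P(X,Y) > 0}, and for an edge e = (X,Y) ∈ E set Q(e) = μ(X)P(X,Y). A simple path from X to Y is a finite sequence of pairwise distinct states beginning at X and ending at Y whose consecutive pairs lie in E; let H be the set of all simple paths between pairs of distinct states and H_{XY} those from X to Y. Let f : H → ℝ≥0 be a multicommodity flow, i.e., Σ_{p∈H_{XY}} f(p) = μ(X)μ(Y) for all X ≠ Y, and define ρ̄(f) = max_{e∈E} (1/Q(e))·Σ_{p∈H, p traverses e} f(p)·len(p), where len(p) is the number of edges of p. Then every eigenvalue λ of P with λ ≠ 1 satisfies λ ≤ 1 − 1/ρ̄(f). -/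
/-!
Sinclair's comparison argument. Let `φ` be an eigenvector for `λ ≠ 1`. Since `μ` is stationary,
`∑ μ φ = 0`, so the variance `∑_{x,y} μ x μ y (φ x - φ y)²` equals `2 ∑ μ φ²`, while the Dirichlet
form `∑_{x,y} μ x P x y (φ x - φ y)²` equals `2 (1 - λ) ∑ μ φ²`. Routing the demand `μ x μ y` along
the flow and using Cauchy–Schwarz along each path, `(φ x - φ y)² ≤ len p ∑_{e ∈ p} (φ e.1 - φ e.2)²`,
bounds the variance by `∑_e (φ e.1 - φ e.2)² · load e`, which is at most `ρ` times the Dirichlet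
form. Hence `1 ≤ ρ (1 - λ)`.
-/

open Finset
open scoped Classical

/-- A simple path in the transition graph of `P`: a list of pairwise distinct states,
with at least two states, whose consecutive pairs are edges (positive transition
probability between distinct states). -/
def IsSimplePath {Ω : Type*} [Fintype Ω] [DecidableEq Ω]
    (P : Matrix Ω Ω ℝ) (p : List Ω) : Prop :=
  p.Nodup ∧ 2 ≤ p.length ∧ p.Chain' (fun a b => a ≠ b ∧ 0 < P a b)

namespace List

variable {α : Type*}

theorem sum_map_zip_tail_sub {G : Type*} [AddCommGroup G] (g : α → G) :
    ∀ {p : List α} {a b : α}, p.head? = some a → p.getLast? = some b →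
      ((p.zip p.tail).map fun e => g e.1 - g e.2).sum = g a - g b
  | [], _, _, ha, _ => by simp at ha
  | [x], _, _, ha, hb => by simp_all
  | x :: y :: t, a, b, ha, hb => by
    obtain rfl : x = a := by simpa using ha
    rw [getLast?_cons_cons] at hb
    have ih := sum_map_zip_tail_sub g (p := y :: t) rfl hb
    simp only [tail_cons, zip_cons_cons, map_cons, sum_cons] at ih ⊢
    rw [ih, sub_add_sub_cancel]

theorem IsChain.rel_of_mem_zip_tail {R : α → α → Prop} :
    ∀ {p : List α}, p.IsChain R → ∀ e ∈ p.zip p.tail, R e.1 e.2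
  | [], _, _, he => by simp at he
  | [_], _, _, he => by simp at he
  | x :: y :: t, h, e, he => by
    rw [isChain_cons_cons] at h
    rcases mem_cons.mp he with rfl | he
    · exact h.1
    · exact h.2.rel_of_mem_zip_tail e he

theorem Nodup.zip_tail {p : List α} (h : p.Nodup) : (p.zip p.tail).Nodup :=
  Nodup.of_map Prod.snd <| by
    rw [map_snd_zip (by simp)]
    exact h.sublist (tail_sublist p)

theorem card_toFinset_zip_tail [DecidableEq α] {p : List α} (h : p.Nodup) :
    #(p.zip p.tail).toFinset = p.length - 1 := by
  rw [toFinset_card_of_nodup h.zip_tail, length_zip, length_tail]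
  omega

theorem sq_sub_le_length_mul_sum_zip_tail [DecidableEq α] (g : α → ℝ) {p : List α}
    (hp : p.Nodup) {a b : α} (ha : p.head? = some a) (hb : p.getLast? = some b) :
    (g a - g b) ^ 2 ≤ ((p.length : ℝ) - 1) * ∑ e ∈ (p.zip p.tail).toFinset, (g e.1 - g e.2) ^ 2 := by
  have hlen : 1 ≤ p.length := by
    obtain ⟨l, rfl⟩ := head?_eq_some_iff.mp ha
    simp
  have htel : ∑ e ∈ (p.zip p.tail).toFinset, (g e.1 - g e.2) = g a - g b := by
    rw [sum_toFinset _ hp.zip_tail, sum_map_zip_tail_sub g ha hb]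
  have hcard : (#(p.zip p.tail).toFinset : ℝ) = p.length - 1 := by
    rw [card_toFinset_zip_tail hp, Nat.cast_sub hlen, Nat.cast_one]
  simpa only [htel, hcard] using sq_sum_le_card_mul_sum_sq (s := (p.zip p.tail).toFinset)
    (f := fun e => g e.1 - g e.2)

end List

section Flow

variable {Ω : Type*} [DecidableEq Ω]

def flowLoad (H : Finset (List Ω)) (f : List Ω → ℝ) (e : Ω × Ω) : ℝ :=
  ∑ p ∈ H.filter (fun p => e ∈ p.zip p.tail), f p * ((p.length : ℝ) - 1)

variable {H : Finset (List Ω)} {f : List Ω → ℝ}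

theorem flowLoad_nonneg (hH : ∀ p ∈ H, p ≠ []) (hf : ∀ p ∈ H, 0 ≤ f p) (e : Ω × Ω) :
    0 ≤ flowLoad H f e := by
  refine sum_nonneg fun p hp => ?_
  have hpH := (mem_filter.mp hp).1
  have : (1 : ℝ) ≤ p.length := by exact_mod_cast List.length_pos_iff.mpr (hH p hpH)
  exact mul_nonneg (hf p hpH) (by linarith)

theorem flowLoad_eq_zero_of_not_rel {R : Ω → Ω → Prop} (hH : ∀ p ∈ H, p.IsChain R)
    {e : Ω × Ω} (he : ¬ R e.1 e.2) : flowLoad H f e = 0 :=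
  sum_eq_zero fun p hp => absurd ((hH p (mem_filter.mp hp).1).rel_of_mem_zip_tail e
    (mem_filter.mp hp).2) he

variable [Fintype Ω]

theorem sum_mul_flowLoad (d : Ω × Ω → ℝ) :
    ∑ e, d e * flowLoad H f e =
      ∑ p ∈ H, f p * (((p.length : ℝ) - 1) * ∑ e ∈ (p.zip p.tail).toFinset, d e) := by
  simp_rw [flowLoad, Finset.mul_sum]
  rw [sum_comm' (t' := univ) (s' := fun e => H.filter (fun p => e ∈ p.zip p.tail))]
  · exact sum_congr rfl fun e _ => sum_congr rfl fun p _ => by ring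
  · simp [and_comm]

theorem sum_sum_sum_filter_head?_getLast? {M : Type*} [AddCommMonoid M] (hH : ∀ p ∈ H, p ≠ [])
    (t : List Ω → M) :
    ∑ x, ∑ y, ∑ p ∈ H.filter (fun p => p.head? = some x ∧ p.getLast? = some y), t p =
      ∑ p ∈ H, t p := by
  simp_rw [sum_filter]
  calc _ = ∑ x, ∑ p ∈ H, ∑ y,
        if p.head? = some x ∧ p.getLast? = some y then t p else 0 :=
        sum_congr rfl fun _ _ => sum_comm
    _ = ∑ p ∈ H, t p := by
      rw [sum_comm]
      refine sum_congr rfl fun p hp => ?_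
      obtain ⟨a, l, rfl⟩ := List.exists_cons_of_ne_nil (hH p hp)
      simp [ite_and, List.getLast?_eq_getLast_of_ne_nil]

theorem sum_sum_mul_sq_sub_le_sum_mul_flowLoad (hH : ∀ p ∈ H, p.Nodup ∧ p ≠ [])
    (hf : ∀ p ∈ H, 0 ≤ f p) {w : Ω → Ω → ℝ}
    (hflow : ∀ X Y, X ≠ Y →
      ∑ p ∈ H.filter (fun p => p.head? = some X ∧ p.getLast? = some Y), f p = w X Y)
    (φ : Ω → ℝ) :
    ∑ x, ∑ y, w x y * (φ x - φ y) ^ 2 ≤ ∑ e, (φ e.1 - φ e.2) ^ 2 * flowLoad H f e := by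
  calc ∑ x, ∑ y, w x y * (φ x - φ y) ^ 2
      = ∑ x, ∑ y, ∑ p ∈ H.filter (fun p => p.head? = some x ∧ p.getLast? = some y),
          f p * (φ x - φ y) ^ 2 := by
        refine sum_congr rfl fun x _ => sum_congr rfl fun y _ => ?_
        obtain rfl | hxy := eq_or_ne x y
        · simp
        · rw [← sum_mul, hflow x y hxy]
    _ ≤ ∑ x, ∑ y, ∑ p ∈ H.filter (fun p => p.head? = some x ∧ p.getLast? = some y),
          f p * (((p.length : ℝ) - 1) * ∑ e ∈ (p.zip p.tail).toFinset, (φ e.1 - φ e.2) ^ 2) := by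
        refine sum_le_sum fun x _ => sum_le_sum fun y _ => sum_le_sum fun p hp => ?_
        obtain ⟨hpH, hx, hy⟩ := mem_filter.mp hp
        exact mul_le_mul_of_nonneg_left
          (List.sq_sub_le_length_mul_sum_zip_tail φ (hH p hpH).1 hx hy) (hf p hpH)
    _ = ∑ e, (φ e.1 - φ e.2) ^ 2 * flowLoad H f e := by
      rw [sum_sum_sum_filter_head?_getLast? (fun p hp => (hH p hp).2), sum_mul_flowLoad]

theorem sum_mul_flowLoad_le_mul_sum_sum {P : Matrix Ω Ω ℝ} {μ : Ω → ℝ} {ρ : ℝ}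
    (hP : ∀ x y, 0 ≤ P x y) (hμ : ∀ x, 0 ≤ μ x) (hρ : 0 ≤ ρ)
    (hH : ∀ p ∈ H, p.IsChain (fun a b => a ≠ b ∧ 0 < P a b))
    (hload : ∀ X Y, X ≠ Y → 0 < P X Y → flowLoad H f (X, Y) ≤ ρ * (μ X * P X Y))
    (φ : Ω → ℝ) :
    ∑ e, (φ e.1 - φ e.2) ^ 2 * flowLoad H f e ≤
      ρ * ∑ x, ∑ y, μ x * P x y * (φ x - φ y) ^ 2 := by
  simp_rw [Fintype.sum_prod_type, mul_sum]
  refine sum_le_sum fun x _ => sum_le_sum fun y _ => ?_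
  by_cases hxy : x ≠ y ∧ 0 < P x y
  · calc (φ x - φ y) ^ 2 * flowLoad H f (x, y)
        ≤ (φ x - φ y) ^ 2 * (ρ * (μ x * P x y)) := by gcongr; exact hload x y hxy.1 hxy.2
      _ = _ := by ring
  · rw [flowLoad_eq_zero_of_not_rel hH hxy, mul_zero]
    have := hμ x; have := hP x y
    positivity

end Flow

theorem sum_mul_sq_pos {ι : Type*} [Fintype ι] {μ φ : ι → ℝ} (hμ : ∀ x, 0 < μ x) (hφ : φ ≠ 0) :
    0 < ∑ x, μ x * φ x ^ 2 := by
  obtain ⟨x, hx⟩ := Function.ne_iff.mp hφ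
  exact sum_pos' (fun i _ => mul_nonneg (hμ i).le (sq_nonneg _))
    ⟨x, mem_univ x, mul_pos (hμ x) (sq_pos_of_ne_zero hx)⟩

namespace Matrix

variable {n K : Type*} [Fintype n]

theorem vecMul_eq_of_reversible [CommSemiring K] {P : Matrix n n K} {μ : n → K}
    (hrow : ∀ x, ∑ y, P x y = 1) (hrev : ∀ x y, μ x * P x y = μ y * P y x) : μ ᵥ* P = μ := by
  ext y
  simp only [vecMul, dotProduct, hrev _ y, ← mul_sum, hrow, mul_one]

theorem sum_mul_eq_zero_of_mulVec_eq_smul [Field K] {P : Matrix n n K} {μ φ : n → K} {lam : K}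
    (hstat : μ ᵥ* P = μ) (hφ : P *ᵥ φ = lam • φ) (hlam : lam ≠ 1) : ∑ x, μ x * φ x = 0 := by
  have h := dotProduct_mulVec μ P φ
  rw [hφ, hstat, dotProduct_smul, smul_eq_mul] at h
  have : (lam - 1) * (μ ⬝ᵥ φ) = 0 := by rw [sub_mul, h, one_mul, sub_self]
  exact (mul_eq_zero.mp this).resolve_left (sub_ne_zero.mpr hlam)

theorem sum_sum_mul_sub_sq_of_mulVec_eq_smul [CommRing K] {P : Matrix n n K} {μ φ : n → K}
    {lam : K} (hrow : ∀ x, ∑ y, P x y = 1) (hstat : μ ᵥ* P = μ) (hφ : P *ᵥ φ = lam • φ) :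
    ∑ x, ∑ y, μ x * P x y * (φ x - φ y) ^ 2 = 2 * (1 - lam) * ∑ x, μ x * φ x ^ 2 := by
  have hcol (y : n) : ∑ x, μ x * P x y = μ y := congrFun hstat y
  have hrowφ (x : n) : ∑ y, P x y * φ y = lam * φ x := congrFun hφ x
  have hsq : ∑ x, ∑ y, μ x * φ x ^ 2 * P x y = ∑ x, μ x * φ x ^ 2 := by
    simp only [← mul_sum, hrow, mul_one]
  have hcross : ∑ x, ∑ y, 2 * (μ x * φ x * (P x y * φ y)) =
      2 * (lam * ∑ x, μ x * φ x ^ 2) := by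
    simp_rw [← mul_sum, hrowφ, mul_sum]
    exact sum_congr rfl fun x _ => by ring
  have hsq' : ∑ x, ∑ y, μ x * P x y * φ y ^ 2 = ∑ x, μ x * φ x ^ 2 := by
    rw [sum_comm]
    simp only [← sum_mul, hcol]
  calc ∑ x, ∑ y, μ x * P x y * (φ x - φ y) ^ 2
      = ∑ x, ∑ y, (μ x * φ x ^ 2 * P x y - 2 * (μ x * φ x * (P x y * φ y))
          + μ x * P x y * φ y ^ 2) :=
        sum_congr rfl fun x _ => sum_congr rfl fun y _ => by ring
    _ = 2 * (1 - lam) * ∑ x, μ x * φ x ^ 2 := by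
      simp only [sum_add_distrib, sum_sub_distrib, hsq, hcross, hsq']
      ring

theorem sum_sum_mul_mul_sub_sq [CommRing K] (μ φ : n → K) :
    ∑ x, ∑ y, μ x * μ y * (φ x - φ y) ^ 2 =
      2 * (∑ x, μ x) * (∑ x, μ x * φ x ^ 2) - 2 * (∑ x, μ x * φ x) ^ 2 := by
  calc ∑ x, ∑ y, μ x * μ y * (φ x - φ y) ^ 2
      = ∑ x, ∑ y, (μ x * φ x ^ 2 * μ y - 2 * (μ x * φ x * (μ y * φ y))
          + μ x * (μ y * φ y ^ 2)) :=
        sum_congr rfl fun x _ => sum_congr rfl fun y _ => by ring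
    _ = _ := by
      simp only [sum_add_distrib, sum_sub_distrib, ← mul_sum, ← sum_mul]
      ring

end Matrix

theorem eigenvalue_le_of_multicommodity_flow_general
    {Ω : Type*} [Fintype Ω] [DecidableEq Ω]
    (P : Matrix Ω Ω ℝ) (μ : Ω → ℝ)
    (hP_nonneg : ∀ x y, 0 ≤ P x y)
    (hP_row : ∀ x, ∑ y, P x y = 1)
    (hμ_pos : ∀ x, 0 < μ x)
    (hμ_sum : ∑ x, μ x = 1)
    (hrev : ∀ x y, μ x * P x y = μ y * P y x)
    -- `H` is the (finite) set of all simple paths between pairs of distinct states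
    (H : Finset (List Ω))
    (hH : ∀ p : List Ω, p ∈ H ↔ IsSimplePath P p)
    -- `f` is a multicommodity flow: nonnegative, and for distinct `X, Y` the flow routed
    -- along simple paths from `X` to `Y` totals `μ X * μ Y`
    (f : List Ω → ℝ)
    (hf_nonneg : ∀ p, 0 ≤ f p)
    (hflow : ∀ X Y : Ω, X ≠ Y →
      ∑ p ∈ H.filter (fun p => p.head? = some X ∧ p.getLast? = some Y), f p = μ X * μ Y)
    -- `ρ` is the maximum over edges `e = (X,Y)` of `(1/Q(e)) ∑_{p ∋ e} f(p) len(p)`,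
    -- where `Q(e) = μ X * P X Y` and `len(p)` is the number of edges of `p`
    (ρ : ℝ)
    (hρ : IsGreatest {r : ℝ | ∃ X Y : Ω, X ≠ Y ∧ 0 < P X Y ∧
      r = (1 / (μ X * P X Y)) *
        ∑ p ∈ H.filter (fun p => (X, Y) ∈ p.zip p.tail),
          f p * ((p.length : ℝ) - 1)} ρ) :
    ∀ lam : ℝ, Module.End.HasEigenvalue (Matrix.toLin' P) lam → lam ≠ 1 →
      lam ≤ 1 - 1 / ρ := by
  intro lam hlam hlam_ne
  obtain ⟨φ, hφ⟩ := hlam.exists_hasEigenvector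
  have hPφ : P.mulVec φ = lam • φ := by simpa only [Matrix.toLin'_apply] using hφ.apply_eq_smul
  have hstat := Matrix.vecMul_eq_of_reversible hP_row hrev
  have hpaths : ∀ p ∈ H, p.Nodup ∧ p ≠ [] := fun p hp => by
    obtain ⟨hnd, hlen, -⟩ := (hH p).mp hp
    exact ⟨hnd, List.ne_nil_of_length_pos (by omega)⟩
  have hload (X Y : Ω) (hXY : X ≠ Y) (hPXY : 0 < P X Y) :
      flowLoad H f (X, Y) ≤ ρ * (μ X * P X Y) := by
    have h := hρ.2 ⟨X, Y, hXY, hPXY, rfl⟩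
    rwa [one_div, inv_mul_le_iff₀ (mul_pos (hμ_pos X) hPXY), mul_comm] at h
  have hρ_nonneg : 0 ≤ ρ := by
    obtain ⟨X, Y, -, hPXY, rfl⟩ := hρ.1
    exact mul_nonneg (one_div_nonneg.mpr (mul_pos (hμ_pos X) hPXY).le)
      (flowLoad_nonneg (fun p hp => (hpaths p hp).2) (fun p _ => hf_nonneg p) _)
  have hpoincare : 2 * ∑ x, μ x * φ x ^ 2 ≤ ρ * (2 * (1 - lam) * ∑ x, μ x * φ x ^ 2) :=
    calc 2 * ∑ x, μ x * φ x ^ 2 = ∑ x, ∑ y, μ x * μ y * (φ x - φ y) ^ 2 := by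
          rw [Matrix.sum_sum_mul_mul_sub_sq, hμ_sum,
            Matrix.sum_mul_eq_zero_of_mulVec_eq_smul hstat hPφ hlam_ne]
          ring
      _ ≤ ∑ e, (φ e.1 - φ e.2) ^ 2 * flowLoad H f e :=
          sum_sum_mul_sq_sub_le_sum_mul_flowLoad hpaths (fun p _ => hf_nonneg p) hflow φ
      _ ≤ ρ * ∑ x, ∑ y, μ x * P x y * (φ x - φ y) ^ 2 :=
          sum_mul_flowLoad_le_mul_sum_sum hP_nonneg (fun x => (hμ_pos x).le) hρ_nonneg
            (fun p hp => ((hH p).mp hp).2.2) hload φ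
      _ = ρ * (2 * (1 - lam) * ∑ x, μ x * φ x ^ 2) := by
          rw [Matrix.sum_sum_mul_sub_sq_of_mulVec_eq_smul hP_row hstat hPφ]
  have hS := sum_mul_sq_pos hμ_pos hφ.2
  have hgap : 1 ≤ ρ * (1 - lam) := by nlinarith
  have hρ_pos : 0 < ρ := hρ_nonneg.lt_of_ne (by rintro rfl; linarith)
  have := (div_le_iff₀ hρ_pos).mpr (by linarith : 1 ≤ (1 - lam) * ρ)
  linarith

/-- multicommodity flow bound on eigenvalues, Sinclair. -/
theorem eigenvalue_le_of_multicommodity_flow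
    {Ω : Type*} [Fintype Ω] [DecidableEq Ω] [Nonempty Ω]
    (P : Matrix Ω Ω ℝ) (μ : Ω → ℝ)
    (hP_nonneg : ∀ x y, 0 ≤ P x y)
    (hP_row : ∀ x, ∑ y, P x y = 1)
    (hirr : ∀ x y, ∃ t : ℕ, 0 < (P ^ t) x y)
    (hμ_pos : ∀ x, 0 < μ x)
    (hμ_sum : ∑ x, μ x = 1)
    (hrev : ∀ x y, μ x * P x y = μ y * P y x)
    -- `H` is the (finite) set of all simple paths between pairs of distinct states
    (H : Finset (List Ω))
    (hH : ∀ p : List Ω, p ∈ H ↔ IsSimplePath P p)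
    -- `f` is a multicommodity flow: nonnegative, and for distinct `X, Y` the flow routed
    -- along simple paths from `X` to `Y` totals `μ X * μ Y`
    (f : List Ω → ℝ)
    (hf_nonneg : ∀ p, 0 ≤ f p)
    (hflow : ∀ X Y : Ω, X ≠ Y →
      ∑ p ∈ H.filter (fun p => p.head? = some X ∧ p.getLast? = some Y), f p = μ X * μ Y)
    -- `ρ` is the maximum over edges `e = (X,Y)` of `(1/Q(e)) ∑_{p ∋ e} f(p) len(p)`,
    -- where `Q(e) = μ X * P X Y` and `len(p)` is the number of edges of `p`
    (ρ : ℝ)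
    (hρ : IsGreatest {r : ℝ | ∃ X Y : Ω, X ≠ Y ∧ 0 < P X Y ∧
      r = (1 / (μ X * P X Y)) *
        ∑ p ∈ H.filter (fun p => (X, Y) ∈ p.zip p.tail),
          f p * ((p.length : ℝ) - 1)} ρ) :
    ∀ lam : ℝ, Module.End.HasEigenvalue (Matrix.toLin' P) lam → lam ≠ 1 →
      lam ≤ 1 - 1 / ρ :=
  eigenvalue_le_of_multicommodity_flow_general P μ hP_nonneg hP_row hμ_pos hμ_sum hrev H hH f
    hf_nonneg hflow ρ hρ
end

section
/- Let V be a finite set, C a collection of subsets of V, F : 2^V → ℝ, and ζ ≥ 0 a real number such that |F(S) + F(T) − F(S∩T) − F(S∪T)| ≤ ζ for all S, T ∈ C. Suppose X, Y, T ∈ C satisfy X∩Y ⊆ T ⊆ X∪Y, and that σ = X△Y△T also belongs to C. Then F(X) + F(Y) ≤ F(T) + F(σ) + 2ζ. (In particular, T∪σ = X∪Y and T∩σ = X∩Y.) -/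
/-! Add the two defect bounds for the pairs `(X, Y)` and `(T, σ)`: they have the same meet
`X ∩ Y` and the same join `X ∪ Y`, so the meet and join terms cancel. -/

open scoped symmDiff

section SymmDiff

variable {α : Type*} [GeneralizedBooleanAlgebra α] {x y t : α}

theorem inf_symmDiff_symmDiff_of_inf_le_of_le_sup (h₁ : x ⊓ y ≤ t) (h₂ : t ≤ x ⊔ y) :
    t ⊓ x ∆ y ∆ t = x ⊓ y := by
  rw [inf_symmDiff_distrib_left, inf_idem, symmDiff_of_le inf_le_left, sdiff_inf_self_left,
    sdiff_symmDiff', sdiff_eq_bot_iff.2 h₂, sup_bot_eq, inf_assoc, inf_eq_right.2 h₁]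

theorem sup_symmDiff_symmDiff_of_inf_le_of_le_sup (h₁ : x ⊓ y ≤ t) (h₂ : t ≤ x ⊔ y) :
    t ⊔ x ∆ y ∆ t = x ⊔ y := by
  rw [symmDiff_def (x ∆ y), sup_comm (x ∆ y \ t), ← sup_assoc, sup_of_le_left sdiff_le,
    sup_sdiff_self_right, symmDiff_eq_sup_sdiff_inf, sup_sdiff_eq_sup h₁, sup_of_le_right h₂]

end SymmDiff

theorem add_le_add_add_two_mul_of_inf_eq_of_sup_eq {β : Type*} [Lattice β] {C : Set β}
    {F : β → ℝ} {ζ : ℝ} (hF : ∀ a ∈ C, ∀ b ∈ C, |F a + F b - F (a ⊓ b) - F (a ⊔ b)| ≤ ζ)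
    {a b c d : β} (ha : a ∈ C) (hb : b ∈ C) (hc : c ∈ C) (hd : d ∈ C)
    (hinf : c ⊓ d = a ⊓ b) (hsup : c ⊔ d = a ⊔ b) :
    F a + F b ≤ F c + F d + 2 * ζ := by
  have hab := (abs_le.1 (hF a ha b hb)).2
  have hcd := (abs_le.1 (hF c hc d hd)).1
  rw [hinf, hsup] at hcd
  linarith

theorem flow_key_inequality_general
    {α : Type*} [DecidableEq α]
    (C : Set (Finset α)) (F : Finset α → ℝ)
    (ζ : ℝ)
    (hbound : ∀ S ∈ C, ∀ T ∈ C, |F S + F T - F (S ∩ T) - F (S ∪ T)| ≤ ζ)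
    (X Y T : Finset α) (hX : X ∈ C) (hY : Y ∈ C) (hT : T ∈ C)
    (hsub1 : X ∩ Y ⊆ T) (hsub2 : T ⊆ X ∪ Y)
    (hσ : symmDiff (symmDiff X Y) T ∈ C) :
    F X + F Y ≤ F T + F (symmDiff (symmDiff X Y) T) + 2 * ζ ∧
    T ∪ symmDiff (symmDiff X Y) T = X ∪ Y ∧
    T ∩ symmDiff (symmDiff X Y) T = X ∩ Y := by
  have hsup := sup_symmDiff_symmDiff_of_inf_le_of_le_sup hsub1 hsub2
  have hinf := inf_symmDiff_symmDiff_of_inf_le_of_le_sup hsub1 hsub2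
  exact ⟨add_le_add_add_two_mul_of_inf_eq_of_sup_eq hbound hX hY hT hσ hinf hsup, hsup, hinf⟩

/-- the key inequality controlling the flow argument:
`F(X) + F(Y) ≤ F(T) + F(X△Y△T) + 2ζ` whenever `X∩Y ⊆ T ⊆ X∪Y` and all four sets lie
in `C`.  The triple symmetric difference is written `symmDiff (symmDiff X Y) T`. -/
theorem flow_key_inequality
    {α : Type*} [Fintype α] [DecidableEq α]
    (C : Set (Finset α)) (F : Finset α → ℝ)
    (ζ : ℝ) (hζ0 : 0 ≤ ζ)
    (hbound : ∀ S ∈ C, ∀ T ∈ C, |F S + F T - F (S ∩ T) - F (S ∪ T)| ≤ ζ)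
    (X Y T : Finset α) (hX : X ∈ C) (hY : Y ∈ C) (hT : T ∈ C)
    (hsub1 : X ∩ Y ⊆ T) (hsub2 : T ⊆ X ∪ Y)
    (hσ : symmDiff (symmDiff X Y) T ∈ C) :
    F X + F Y ≤ F T + F (symmDiff (symmDiff X Y) T) + 2 * ζ ∧
    T ∪ symmDiff (symmDiff X Y) T = X ∪ Y ∧
    T ∩ symmDiff (symmDiff X Y) T = X ∩ Y :=
  flow_key_inequality_general C F ζ hbound X Y T hX hY hT hsub1 hsub2 hσ
end
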